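/- arXiv:2401.12553 — 2 statements merged into one kernel-verified Lean document; each statement's English description precedes it below -/
import Mathlib

section
/- Let R, C, O be {0,1}-valued random variables, X discrete, and let A be an event (representing historical click feedback) with P(A, X=x) > 0. Suppose there exist events B (historical relevance) and D (historical observation) such that A = B ∩ D, and B and D are conditionally independent given X, and also given (R, X). Then P(R=1 | A, X=x) = [ P(R=1 | D, X=x) / P(R=1|X=x) ] · P(R=1 | B, X=x), provided all conditional probabilities involved are positive. -/
/-! Bayes' rule turns `P(R | B ∩ D, X = x)` into `P(B ∩ D | R, X = x) · P(R | X = x) / P(B ∩ D | X = x)`.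
Both factors involving `B ∩ D` split by conditional independence, and regrouping the four resulting
factors with Bayes' rule applied backwards to `B` and to `D` separately gives the product. -/

open scoped Classical
open Finset

noncomputable def pr {Ω : Type*} [Fintype Ω] (P : Ω → ℝ) (E : Ω → Prop) : ℝ :=
  ∑ ω, if E ω then P ω else 0

noncomputable def cpr {Ω : Type*} [Fintype Ω] (P : Ω → ℝ) (E F : Ω → Prop) : ℝ :=
  pr P (fun ω => E ω ∧ F ω) / pr P F

noncomputable def klTerm (a b : ℝ) : ℝ :=
  if a = 0 then 0 else a * Real.log (a / b)

noncomputable def condMI {Ω α : Type*} [Fintype Ω] (P : Ω → ℝ)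
    (R O : Ω → ℕ) (X : Ω → α) (x : α) : ℝ :=
  ∑ r ∈ ({0, 1} : Finset ℕ), ∑ o ∈ ({0, 1} : Finset ℕ),
    klTerm (cpr P (fun ω => R ω = r ∧ O ω = o) (fun ω => X ω = x))
      (cpr P (fun ω => R ω = r) (fun ω => X ω = x) *
        cpr P (fun ω => O ω = o) (fun ω => X ω = x))

noncomputable def expect {Ω : Type*} [Fintype Ω] (P : Ω → ℝ) (f : Ω → ℝ) : ℝ :=
  ∑ ω, P ω * f ω

noncomputable def cexpect {Ω : Type*} [Fintype Ω] (P : Ω → ℝ) (f : Ω → ℝ) (E : Ω → Prop) : ℝ :=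
  (∑ ω, if E ω then P ω * f ω else 0) / pr P E

section

variable {Ω : Type*} [Fintype Ω] {P : Ω → ℝ}

lemma pr_congr {E F : Ω → Prop} (h : ∀ ω, E ω ↔ F ω) : pr P E = pr P F := by
  simp only [pr, h]

lemma pr_nonneg (hP : ∀ ω, 0 ≤ P ω) (E : Ω → Prop) : 0 ≤ pr P E :=
  Finset.sum_nonneg fun ω _ => by split_ifs <;> simp [hP ω]

lemma pr_pos_of_cpr_pos (hP : ∀ ω, 0 ≤ P ω) {E F : Ω → Prop} (h : 0 < cpr P E F) :
    0 < pr P F ∧ 0 < pr P (fun ω => E ω ∧ F ω) := by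
  have hF : 0 < pr P F := by
    rcases (pr_nonneg hP F).lt_or_eq with hF | hF
    · exact hF
    · simp [cpr, ← hF] at h
  exact ⟨hF, (div_pos_iff_of_pos_right hF).mp h⟩

lemma cpr_bayes {E F C : Ω → Prop} (hC : pr P C ≠ 0) (hEC : pr P (fun ω => E ω ∧ C ω) ≠ 0) :
    cpr P E (fun ω => F ω ∧ C ω) =
      cpr P F (fun ω => E ω ∧ C ω) * cpr P E C / cpr P F C := by
  have hswap : pr P (fun ω => F ω ∧ E ω ∧ C ω) = pr P (fun ω => E ω ∧ F ω ∧ C ω) :=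
    pr_congr fun ω => and_left_comm
  simp only [cpr, hswap]
  field_simp

lemma cpr_inter_eq_of_condIndep {R B D C : Ω → Prop}
    (hC : 0 < pr P C) (hRC : 0 < pr P (fun ω => R ω ∧ C ω))
    (hCI : cpr P (fun ω => B ω ∧ D ω) C = cpr P B C * cpr P D C)
    (hCIR : cpr P (fun ω => B ω ∧ D ω) (fun ω => R ω ∧ C ω) =
      cpr P B (fun ω => R ω ∧ C ω) * cpr P D (fun ω => R ω ∧ C ω)) :
    cpr P R (fun ω => (B ω ∧ D ω) ∧ C ω) =
      cpr P R (fun ω => D ω ∧ C ω) / cpr P R C * cpr P R (fun ω => B ω ∧ C ω) := by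
  have hRC' : cpr P R C ≠ 0 := (div_pos hRC hC).ne'
  rw [cpr_bayes hC.ne' hRC.ne', cpr_bayes hC.ne' hRC.ne', cpr_bayes hC.ne' hRC.ne', hCI, hCIR]
  field_simp

end

theorem stmt_7_general {Ω α : Type*} [Fintype Ω] (P : Ω → ℝ) (R : Ω → ℕ) (X : Ω → α)
    (A B D : Ω → Prop) (x : α)
    (hP : ∀ ω, 0 ≤ P ω)
    (hA : ∀ ω, A ω ↔ (B ω ∧ D ω))
    (hCIX : ∀ x' : α, 0 < pr P (fun ω => X ω = x') →
      cpr P (fun ω => B ω ∧ D ω) (fun ω => X ω = x') =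
        cpr P B (fun ω => X ω = x') * cpr P D (fun ω => X ω = x'))
    (hCIRX : ∀ r : ℕ, ∀ x' : α, 0 < pr P (fun ω => R ω = r ∧ X ω = x') →
      cpr P (fun ω => B ω ∧ D ω) (fun ω => R ω = r ∧ X ω = x') =
        cpr P B (fun ω => R ω = r ∧ X ω = x') *
          cpr P D (fun ω => R ω = r ∧ X ω = x'))
    (hpos1 : 0 < cpr P (fun ω => R ω = 1) (fun ω => X ω = x)) :
    cpr P (fun ω => R ω = 1) (fun ω => A ω ∧ X ω = x) =
      (cpr P (fun ω => R ω = 1) (fun ω => D ω ∧ X ω = x) /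
          cpr P (fun ω => R ω = 1) (fun ω => X ω = x)) *
        cpr P (fun ω => R ω = 1) (fun ω => B ω ∧ X ω = x) := by
  obtain rfl : A = fun ω => B ω ∧ D ω := funext fun ω => propext (hA ω)
  obtain ⟨hX, hRX⟩ := pr_pos_of_cpr_pos hP hpos1
  exact cpr_inter_eq_of_condIndep hX hRX (hCIX x hX) (hCIRX 1 x hRX)

theorem stmt_7 {Ω α : Type*} [Fintype Ω] (P : Ω → ℝ) (R : Ω → ℕ) (X : Ω → α)
    (A B D : Ω → Prop) (x : α)
    (hP : ∀ ω, 0 ≤ P ω) (hsum : ∑ ω, P ω = 1)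
    (hR : ∀ ω, R ω = 0 ∨ R ω = 1)
    (hA : ∀ ω, A ω ↔ (B ω ∧ D ω))
    (hAx : 0 < pr P (fun ω => A ω ∧ X ω = x))
    (hCIX : ∀ x' : α, 0 < pr P (fun ω => X ω = x') →
      cpr P (fun ω => B ω ∧ D ω) (fun ω => X ω = x') =
        cpr P B (fun ω => X ω = x') * cpr P D (fun ω => X ω = x'))
    (hCIRX : ∀ r : ℕ, ∀ x' : α, 0 < pr P (fun ω => R ω = r ∧ X ω = x') →
      cpr P (fun ω => B ω ∧ D ω) (fun ω => R ω = r ∧ X ω = x') =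
        cpr P B (fun ω => R ω = r ∧ X ω = x') *
          cpr P D (fun ω => R ω = r ∧ X ω = x'))
    (hpos1 : 0 < cpr P (fun ω => R ω = 1) (fun ω => X ω = x))
    (hpos2 : 0 < pr P (fun ω => B ω ∧ X ω = x))
    (hpos3 : 0 < pr P (fun ω => D ω ∧ X ω = x))
    (hpos4 : 0 < cpr P (fun ω => R ω = 1) (fun ω => B ω ∧ X ω = x))
    (hpos5 : 0 < cpr P (fun ω => R ω = 1) (fun ω => D ω ∧ X ω = x)) :
    cpr P (fun ω => R ω = 1) (fun ω => A ω ∧ X ω = x) =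
      (cpr P (fun ω => R ω = 1) (fun ω => D ω ∧ X ω = x) /
          cpr P (fun ω => R ω = 1) (fun ω => X ω = x)) *
        cpr P (fun ω => R ω = 1) (fun ω => B ω ∧ X ω = x) :=
  stmt_7_general P R X A B D x hP hA hCIX hCIRX hpos1
end

section
/- Let O₁,…,Oₙ be {0,1}-valued random variables and c₁,…,cₙ, x₁,…,xₙ fixed data with cᵢ = oᵢ·rᵢ for fixed relevance labels rᵢ ∈ {0,1}, where oᵢ is the realization of Oᵢ. Suppose E[Oᵢ] = πᵢ with πᵢ > 0 for all i, and let Δ : ℝ × ℝ → ℝ be any loss function and f any ranking function. Then E[ Σᵢ Δ(f(xᵢ), Cᵢ)/πᵢ ] = Σᵢ Δ(f(xᵢ), rᵢ) whenever Δ(f(xᵢ), 0) = 0 for all i, where Cᵢ = Oᵢ·rᵢ. -/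
open scoped Classical
open Finset

theorem stmt_13 {Ω α : Type*} [Fintype Ω] (n : ℕ) (P : Ω → ℝ) (O : Fin n → Ω → ℕ)
    (r : Fin n → ℕ) (x : Fin n → α) (f : α → ℝ) (Δ : ℝ → ℝ → ℝ) (π : Fin n → ℝ)
    (hP : ∀ ω, 0 ≤ P ω) (hsum : ∑ ω, P ω = 1)
    (hO : ∀ i ω, O i ω = 0 ∨ O i ω = 1) (hr : ∀ i, r i = 0 ∨ r i = 1)
    (hπ : ∀ i, π i = expect P (fun ω => (O i ω : ℝ))) (hπpos : ∀ i, 0 < π i)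
    (hΔ : ∀ i, Δ (f (x i)) 0 = 0) :
    expect P (fun ω => ∑ i, Δ (f (x i)) ((O i ω * r i : ℕ) : ℝ) / π i) =
      ∑ i, Δ (f (x i)) (r i : ℝ) := by
  have key : ∀ i ω, Δ (f (x i)) ((O i ω * r i : ℕ) : ℝ) = (O i ω : ℝ) * Δ (f (x i)) (r i : ℝ) := by
    intro i ω
    rcases hO i ω with h | h <;> rcases hr i with h2 | h2 <;> simp [h, h2, hΔ i]
  unfold _root_.expect
  simp only [key, Finset.mul_sum]
  rw [Finset.sum_comm]
  refine Finset.sum_congr rfl fun i _ => ?_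
  have : ∀ ω, P ω * ((O i ω : ℝ) * Δ (f (x i)) (r i : ℝ) / π i)
      = (P ω * (O i ω : ℝ)) * (Δ (f (x i)) (r i : ℝ) / π i) := fun ω => by ring
  simp only [this, ← Finset.sum_mul]
  have hπi := hπ i
  unfold _root_.expect at hπi
  rw [← hπi]
  rw [mul_div_cancel₀ _ (hπpos i).ne']
end
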